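/- Let F = {f_1, f_2, …} ⊆ R[X] be a set of nonzero polynomials with distinct elements, let Y = {y_1, y_2, …} be variables in bijection with F, let π : R[Y] → R[Lt F] be the evaluation homomorphism y_i ↦ lt(f_i), and let I(Lt F) = ker π. Let {P_j(Y) : j ∈ J} be a set of T_X-homogeneous generators for the ideal I(Lt F) ⊆ R[Y]. Then F is a SAGBI basis for R[F] if and only if for each j ∈ J, the polynomial P_j(F) (obtained from P_j(Y) by substituting f_i for y_i) s-reduces to 0 via F. -/

import Mathlib

open MvPolynomial

/-- A term order on the monomials (exponent vectors) of a polynomial ring in `n`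
variables: a well-founded linear order compatible with multiplication of power
products (i.e. with addition of exponent vectors). -/
structure TermOrder (n : ℕ) where
  lo : LinearOrder (Fin n →₀ ℕ)
  wf : WellFounded lo.lt
  add_le_add : ∀ a b c : Fin n →₀ ℕ, lo.le a b → lo.le (a + c) (b + c)

namespace TermOrder

variable {n : ℕ} {R : Type*} [CommRing R]

/-- `lp p`: the leading power product (exponent vector) of `p`; junk value `0`
for the zero polynomial. -/
noncomputable def lp (ord : TermOrder n) (p : MvPolynomial (Fin n) R) : Fin n →₀ ℕ :=
  WithBot.unbotD 0 (@Finset.max _ ord.lo p.support)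

/-- `lc p`: the leading coefficient of `p` (0 if `p = 0`). -/
noncomputable def lc (ord : TermOrder n) (p : MvPolynomial (Fin n) R) : R :=
  p.coeff (ord.lp p)

/-- `ltm p`: the leading term `lc(p)·lp(p)` of `p` (0 if `p = 0`). -/
noncomputable def ltm (ord : TermOrder n) (p : MvPolynomial (Fin n) R) : MvPolynomial (Fin n) R :=
  monomial (ord.lp p) (ord.lc p)

end TermOrder

variable {n : ℕ} {R : Type*} [CommRing R]

/-- An `F`-power product: a finite product `∏ fᵢ^{eᵢ}` with `fᵢ ∈ F`. -/
def IsPowerProduct (F : Set (MvPolynomial (Fin n) R)) (q : MvPolynomial (Fin n) R) : Prop :=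
  ∃ e : MvPolynomial (Fin n) R →₀ ℕ, (e.support : Set (MvPolynomial (Fin n) R)) ⊆ F ∧
    q = e.prod (fun f k => f ^ k)

/-- `F` is a SAGBI basis for the `R`-subalgebra `A`: `R[Lt A] = R[Lt F]`. -/
def IsSAGBI (ord : TermOrder n) (A : Subalgebra R (MvPolynomial (Fin n) R))
    (F : Set (MvPolynomial (Fin n) R)) : Prop :=
  Algebra.adjoin R (ord.ltm '' (A : Set (MvPolynomial (Fin n) R))) =
    Algebra.adjoin R (ord.ltm '' F)

/-- One step of s-reduction of `g` to `h` via `F`. -/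
def SStep (ord : TermOrder n) (F : Set (MvPolynomial (Fin n) R))
    (g h : MvPolynomial (Fin n) R) : Prop :=
  ∃ (β : Fin n →₀ ℕ) (N : ℕ) (q : Fin N → MvPolynomial (Fin n) R) (r : Fin N → R),
    g.coeff β ≠ 0 ∧
    (∀ i, IsPowerProduct F (q i) ∧ q i ≠ 0 ∧ ord.lp (q i) = β) ∧
    g.coeff β = ∑ i, r i * ord.lc (q i) ∧
    h = g - ∑ i, C (r i) * q i

/-- `g` s-reduces to `h` via `F`: a finite chain of one-step s-reductions. -/
def SReduce (ord : TermOrder n) (F : Set (MvPolynomial (Fin n) R)) :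
    MvPolynomial (Fin n) R → MvPolynomial (Fin n) R → Prop :=
  Relation.ReflTransGen (SStep ord F)

/-- One step of si-reduction of `h` to `h'` via `G`, relative to the subalgebra `A`. -/
def SiStep (ord : TermOrder n) (A : Subalgebra R (MvPolynomial (Fin n) R))
    (G : Set (MvPolynomial (Fin n) R)) (h h' : MvPolynomial (Fin n) R) : Prop :=
  ∃ (α : Fin n →₀ ℕ) (M : ℕ) (g a : Fin M → MvPolynomial (Fin n) R),
    h.coeff α ≠ 0 ∧
    (∀ i, g i ∈ G) ∧ (∀ i, a i ∈ A) ∧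
    (∀ i, a i * g i ≠ 0 ∧ ord.lp (a i * g i) = α) ∧
    (monomial α (h.coeff α) : MvPolynomial (Fin n) R) = ∑ i, ord.ltm (a i * g i) ∧
    h' = h - ∑ i, a i * g i

/-- `h` si-reduces to `h'` via `G`: a finite chain of one-step si-reductions. -/
def SiReduce (ord : TermOrder n) (A : Subalgebra R (MvPolynomial (Fin n) R))
    (G : Set (MvPolynomial (Fin n) R)) :
    MvPolynomial (Fin n) R → MvPolynomial (Fin n) R → Prop :=
  Relation.ReflTransGen (SiStep ord A G)

/-- The subalgebra `R[Lt A]` generated by the leading terms of elements of `A`. -/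
noncomputable def LtAlg (ord : TermOrder n) (A : Subalgebra R (MvPolynomial (Fin n) R)) :
    Subalgebra R (MvPolynomial (Fin n) R) :=
  Algebra.adjoin R (ord.ltm '' (A : Set (MvPolynomial (Fin n) R)))

/-- The leading term of an element of `A`, as an element of `R[Lt A]`. -/
noncomputable def ltA (ord : TermOrder n) (A : Subalgebra R (MvPolynomial (Fin n) R))
    (a : A) : LtAlg ord A :=
  ⟨ord.ltm (a : MvPolynomial (Fin n) R), Algebra.subset_adjoin ⟨a, a.2, rfl⟩⟩

/-- `G ⊆ I` is a SAGBI–Gröbner basis (SG-basis) for the ideal `I` of `A`: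
`Lt G` generates the ideal `⟨Lt I⟩` in the subalgebra `R[Lt A]`. -/
def IsSGBasis (ord : TermOrder n) (A : Subalgebra R (MvPolynomial (Fin n) R))
    (I : Ideal A) (G : Set A) : Prop :=
  Ideal.span
      ((Subtype.val ⁻¹' (ord.ltm '' (Subtype.val '' G)) : Set (LtAlg ord A))) =
  Ideal.span
      ((Subtype.val ⁻¹' (ord.ltm '' (Subtype.val '' (I : Set A))) : Set (LtAlg ord A)))

/-!
Grade `R[Y]` by giving `yᵢ` the weight `lp(fᵢ)` in the ordered monoid of power products. Then
`π : yᵢ ↦ lt(fᵢ)` sends a homogeneous `H` of weight `d` to a multiple of the single monomial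
`d`, while `H(F) - π(H)` only involves power products below `d`.

If `F` is a SAGBI basis, the leading term of `g ∈ R[F]` is `π(H)` for a homogeneous `H`, and
subtracting `H(F)` is an s-reduction step that lowers `lp(g)`; so everything in `R[F]`, in
particular every `P_j(F)`, s-reduces to `0`.

Conversely, an s-reduction of `P_j(F)` to `0` writes `P_j(F)` through `F`-power products of weight
at most `lp(P_j(F))`, which is below the weight of `P_j` because `π(P_j) = 0`. By homogeneity this
lower representation passes to every homogeneous element of `ker π`. Now write `g ∈ R[F]` as
`Q(F)` with all weights `≤ d` and let `H` be the weight-`d` part of `Q`: either `π(H) ≠ 0`, and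
then `lt(g) = π(H) ∈ R[Lt F]`, or `H ∈ ker π` and `g` has a representation of smaller weight.
Well-founded induction on `d` concludes.
-/

namespace TermOrder

variable {n : ℕ} (ord : TermOrder n)

def Syn (_ord : TermOrder n) : Type := Fin n →₀ ℕ

instance : LinearOrder ord.Syn := ord.lo

noncomputable instance : AddCommMonoid ord.Syn := inferInstanceAs (AddCommMonoid (Fin n →₀ ℕ))

instance : IsOrderedAddMonoid ord.Syn where
  add_le_add_left a b h c := ord.add_le_add a b c h

instance : WellFoundedLT ord.Syn := ⟨ord.wf⟩

instance : IsLeftCancelAdd ord.Syn := inferInstanceAs (IsLeftCancelAdd (Fin n →₀ ℕ))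

/-- A negative `c` would give the descending chain `c + c < c`. -/
theorem syn_zero_le (c : ord.Syn) : 0 ≤ c := by
  induction c using WellFoundedLT.induction with
  | _ c ih =>
    by_contra! hc
    have hcc : c + c < c := by simpa using add_lt_add_left hc c
    exact (ih _ hcc).not_gt (hcc.trans hc)

noncomputable def toSyn : (Fin n →₀ ℕ) ≃+ ord.Syn := AddEquiv.refl _

noncomputable def toMonomialOrder : MonomialOrder (Fin n) where
  syn := ord.Syn
  toSyn := ord.toSyn
  toSyn_monotone a b hab := by
    obtain ⟨c, rfl⟩ := exists_add_of_le hab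
    rw [map_add]
    exact le_add_of_nonneg_right (ord.syn_zero_le _)

variable {R : Type*} [CommRing R]

theorem lp_eq_degree (p : MvPolynomial (Fin n) R) :
    ord.lp p = ord.toMonomialOrder.degree p := by
  rcases eq_or_ne p 0 with rfl | hp
  · simp [lp]
  · let _ : LinearOrder (Fin n →₀ ℕ) := ord.lo
    obtain ⟨a, ha⟩ := Finset.max_of_nonempty (support_nonempty.mpr hp)
    have hlp : ord.lp p = a := by simp [lp, ha]
    rw [hlp]
    apply ord.toMonomialOrder.toSyn.injective
    exact le_antisymm (ord.toMonomialOrder.le_degree (Finset.mem_of_max ha))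
      (Finset.le_max_of_eq (ord.toMonomialOrder.degree_mem_support hp) ha)

theorem lc_eq_leadingCoeff (p : MvPolynomial (Fin n) R) :
    ord.lc p = ord.toMonomialOrder.leadingCoeff p := by
  rw [lc, lp_eq_degree]
  rfl

theorem ltm_eq_leadingTerm : ord.ltm (R := R) = ord.toMonomialOrder.leadingTerm := by
  ext1 p
  rw [ltm, lc_eq_leadingCoeff, lp_eq_degree]
  rfl

end TermOrder

theorem Finset.sum_equivFin_symm {β M : Type*} [AddCommMonoid M] (s : Finset β) (φ : β → M) :
    ∑ k, φ (s.equivFin.symm k) = ∑ x ∈ s, φ x :=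
  (Equiv.sum_comp s.equivFin.symm (φ ∘ (↑))).trans (s.sum_coe_sort φ)

namespace MvPolynomial

variable {σ R M : Type*} [AddCommMonoid M]

theorem map_mem_of_mem_restrictSupport [CommSemiring R] [Module R M]
    (L : MvPolynomial σ R →ₗ[R] M) {s : Set (σ →₀ ℕ)} {N : Submodule R M}
    (h : ∀ e ∈ s, L (monomial e 1) ∈ N) {Q : MvPolynomial σ R}
    (hQ : Q ∈ restrictSupport R s) : L Q ∈ N := by
  suffices (restrictSupport R s).map L ≤ N from this (Submodule.mem_map_of_mem hQ)
  rw [restrictSupport_eq_span, Submodule.map_span_le]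
  rintro _ ⟨e, he, rfl⟩
  exact h e he

theorem isWeightedHomogeneous_iff_mem_restrictSupport [CommSemiring R] {w : σ → M}
    {φ : MvPolynomial σ R} {d : M} :
    IsWeightedHomogeneous w φ d ↔ φ ∈ restrictSupport R (Finsupp.weight w ⁻¹' {d}) := by
  simp [IsWeightedHomogeneous, mem_restrictSupport_iff, Set.subset_def]

theorem sub_weightedHomogeneousComponent_mem_restrictSupport [CommRing R] {w : σ → M}
    {S : Set M} {φ : MvPolynomial σ R}
    (hφ : φ ∈ restrictSupport R (Finsupp.weight w ⁻¹' S)) (d : M) :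
    φ - weightedHomogeneousComponent w d φ ∈
      restrictSupport R (Finsupp.weight w ⁻¹' (S \ {d})) := by
  classical
  rw [mem_restrictSupport_iff] at hφ ⊢
  intro e he
  rw [Finset.mem_coe, mem_support_iff, coeff_sub, coeff_weightedHomogeneousComponent] at he
  split_ifs at he with hd
  · simp at he
  · exact ⟨hφ (mem_support_iff.mpr (by simpa using he)), hd⟩

theorem aeval_mem_adjoin_range {A : Type*} [CommSemiring R] [CommSemiring A] [Algebra R A]
    (f : σ → A) (Q : MvPolynomial σ R) : aeval f Q ∈ Algebra.adjoin R (Set.range f) := by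
  rw [Algebra.adjoin_range_eq_range_aeval]
  exact AlgHom.mem_range_self _ Q

end MvPolynomial


namespace MonomialOrder

open Set

variable {σ ι R : Type*} [CommRing R] (m : MonomialOrder σ)

theorem mem_restrictSupport_Iic_degree (p : MvPolynomial σ R) :
    p ∈ restrictSupport R (m.toSyn ⁻¹' Iic (m.toSyn (m.degree p))) :=
  fun _ hγ => m.le_degree hγ

theorem sub_leadingTerm_mem_restrictSupport (p : MvPolynomial σ R) :
    p - m.leadingTerm p ∈ restrictSupport R (m.toSyn ⁻¹' Iio (m.toSyn (m.degree p))) := by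
  classical
  rw [mem_restrictSupport_iff]
  intro γ hγ
  rw [Finset.mem_coe, mem_support_iff, coeff_sub, leadingTerm, coeff_monomial] at hγ
  have hne : γ ≠ m.degree p := by rintro rfl; simp [leadingCoeff] at hγ
  rw [if_neg hne.symm, sub_zero] at hγ
  exact (m.le_degree (mem_support_iff.mpr hγ)).lt_of_ne (m.toSyn.injective.ne hne)

theorem leadingTerm_eq_of_sub_mem_restrictSupport {p q : MvPolynomial σ R} {d : m.syn}
    (hq : q ∈ restrictSupport R (m.toSyn ⁻¹' {d})) (hq0 : q ≠ 0)
    (hpq : p - q ∈ restrictSupport R (m.toSyn ⁻¹' Iio d)) :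
    m.leadingTerm p = q := by
  classical
  set D := m.toSyn.symm d
  have hqD : ∀ γ, γ ≠ D → q.coeff γ = 0 := fun γ hγ => notMem_support_iff.mp fun h =>
    hγ (m.toSyn.eq_symm_apply.mpr (hq h))
  have hpD : p.coeff D = q.coeff D := by
    have : (p - q).coeff D = 0 := notMem_support_iff.mp fun h => by simpa [D] using hpq h
    rwa [coeff_sub, sub_eq_zero] at this
  have hlt : ∀ γ ∈ p.support, m.toSyn γ ≤ d := by
    intro γ hγ
    by_cases hqγ : γ ∈ q.support
    · exact (hq hqγ).le
    · have : γ ∈ (p - q).support := by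
        rw [mem_support_iff, coeff_sub, notMem_support_iff.mp hqγ, sub_zero]
        exact mem_support_iff.mp hγ
      exact (hpq this).le
  have hqD0 : q.coeff D ≠ 0 := fun h => hq0 (MvPolynomial.ext _ _ fun γ => by
    rcases eq_or_ne γ D with rfl | hγ
    · simpa using h
    · simpa using hqD γ hγ)
  have hdeg : m.degree p = D := m.toSyn.injective <| le_antisymm
    (by simpa [D] using hlt _ (m.degree_mem_support (fun h => hqD0 (by simp [← hpD, h]))))
    (m.le_degree (mem_support_iff.mpr (hpD ▸ hqD0)))
  ext γ
  rw [leadingTerm, leadingCoeff, hdeg, hpD, coeff_monomial]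
  split_ifs with h
  · rw [h]
  · exact (hqD γ (Ne.symm h)).symm

/-- The weight of `yᵢ` in the `T_X`-grading of `R[Y]`. -/
noncomputable def degreeWeight (f : ι → MvPolynomial σ R) : ι → m.syn :=
  fun i => m.toSyn (m.degree (f i))

/-- The polynomials `∑ cₑ Fᵉ` in which every `F`-power product `Fᵉ` has weight in `S`. -/
noncomputable def representable (f : ι → MvPolynomial σ R) (S : Set m.syn) :
    Submodule R (MvPolynomial σ R) :=
  (restrictSupport R (Finsupp.weight (m.degreeWeight f) ⁻¹' S)).map (aeval f).toLinearMap

variable {f : ι → MvPolynomial σ R}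

theorem aeval_mem_representable {S : Set m.syn} {Q : MvPolynomial ι R}
    (hQ : Q ∈ restrictSupport R (Finsupp.weight (m.degreeWeight f) ⁻¹' S)) :
    aeval f Q ∈ m.representable f S :=
  Submodule.mem_map_of_mem hQ

theorem aeval_mem_representable_Iic_sup (Q : MvPolynomial ι R) :
    aeval f Q ∈ m.representable f (Iic (Q.support.sup (Finsupp.weight (m.degreeWeight f)))) :=
  m.aeval_mem_representable fun _ he => Finset.le_sup he

theorem eq_zero_or_exists_lt_of_mem_representable_Iio {d : m.syn} {g : MvPolynomial σ R}
    (hg : g ∈ m.representable f (Iio d)) :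
    g = 0 ∨ ∃ d' < d, g ∈ m.representable f (Iic d') := by
  obtain ⟨Q, hQ, rfl⟩ := hg
  rcases Q.support.eq_empty_or_nonempty with h | ⟨e, he⟩
  · left
    simp [support_eq_empty.mp h]
  · refine Or.inr ⟨_, ?_, m.aeval_mem_representable_Iic_sup Q⟩
    exact (Finset.sup_lt_iff (bot_le.trans_lt (hQ he))).mpr fun e he => hQ he

theorem aeval_monomial_mul_mem_representable {δ : m.syn} {g : MvPolynomial σ R}
    (hg : g ∈ m.representable f (Iio δ)) (a : ι →₀ ℕ) (r : R) :
    aeval f (monomial a r) * g ∈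
      m.representable f (Iio (Finsupp.weight (m.degreeWeight f) a + δ)) := by
  classical
  obtain ⟨Q, hQ, rfl⟩ := hg
  rw [AlgHom.toLinearMap_apply, ← map_mul]
  refine m.aeval_mem_representable fun e he => ?_
  obtain ⟨a', ha', e', he', rfl⟩ := Finset.mem_add.mp (support_mul _ _ he)
  rw [Finset.mem_singleton.mp (support_monomial_subset ha'), mem_preimage, map_add]
  exact add_lt_add_right (hQ he') _

theorem aeval_weightedHomogeneousComponent_mul_mem_representable {P : MvPolynomial ι R}
    {δ : m.syn} (hP : IsWeightedHomogeneous (m.degreeWeight f) P δ)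
    (hPF : aeval f P ∈ m.representable f (Iio δ)) (c : MvPolynomial ι R) (d : m.syn) :
    aeval f (weightedHomogeneousComponent (m.degreeWeight f) d (c * P)) ∈
      m.representable f (Iio d) := by
  induction c using MvPolynomial.induction_on' with
  | monomial a r =>
    have hmul := (isWeightedHomogeneous_monomial (m.degreeWeight f) a r rfl).mul hP
    rcases eq_or_ne (Finsupp.weight (m.degreeWeight f) a + δ) d with rfl | hne
    · rw [weightedHomogeneousComponent_eq_self hmul, map_mul]
      exact m.aeval_monomial_mul_mem_representable hPF a r
    · rw [hmul.weightedHomogeneousComponent_ne d hne.symm, map_zero]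
      exact zero_mem _
  | add c₁ c₂ h₁ h₂ =>
    rw [add_mul, map_add, map_add]
    exact add_mem h₁ h₂

theorem aeval_mem_representable_of_mem_span {J : Type*} {P : J → MvPolynomial ι R}
    {δ : J → m.syn} (hP : ∀ j, IsWeightedHomogeneous (m.degreeWeight f) (P j) (δ j))
    (hPF : ∀ j, aeval f (P j) ∈ m.representable f (Iio (δ j))) {T : MvPolynomial ι R}
    (hT : T ∈ Ideal.span (range P)) {d : m.syn}
    (hTd : IsWeightedHomogeneous (m.degreeWeight f) T d) :
    aeval f T ∈ m.representable f (Iio d) := by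
  obtain ⟨c, rfl⟩ := Finsupp.mem_span_range_iff_exists_finsupp.mp hT
  rw [← weightedHomogeneousComponent_eq_self hTd, map_finsuppSum, map_finsuppSum]
  exact Submodule.finsuppSum_mem _ _ _ _ fun j _ =>
    m.aeval_weightedHomogeneousComponent_mul_mem_representable (hP j) (hPF j) _ d

variable [NoZeroDivisors R]

@[simps]
noncomputable def leadingTermMonoidHom :
    MvPolynomial σ R →* MvPolynomial σ R where
  toFun := m.leadingTerm
  map_one' := by simpa using m.leadingTerm_C (1 : R)
  map_mul' := m.leadingTerm_mul

theorem leadingTerm_prod_pow (e : ι →₀ ℕ) :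
    m.leadingTerm (e.prod fun i k => f i ^ k) = e.prod fun i k => m.leadingTerm (f i) ^ k := by
  rw [← leadingTermMonoidHom_apply, map_finsuppProd]
  simp only [map_pow, leadingTermMonoidHom_apply]

theorem toSyn_degree_prod_pow (hf : ∀ i, f i ≠ 0) (e : ι →₀ ℕ) :
    m.toSyn (m.degree (e.prod fun i k => f i ^ k)) = Finsupp.weight (m.degreeWeight f) e := by
  rw [Finsupp.prod, m.degree_prod fun i _ => pow_ne_zero _ (hf i), map_sum, Finsupp.weight_apply,
    Finsupp.sum]
  simp [degree_pow, degreeWeight]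

theorem aeval_leadingTerm_monomial (e : ι →₀ ℕ) (c : R) :
    aeval (fun i => m.leadingTerm (f i)) (monomial e c) =
      monomial (m.degree (e.prod fun i k => f i ^ k))
        (c * m.leadingCoeff (e.prod fun i k => f i ^ k)) := by
  rw [aeval_monomial, ← leadingTerm_prod_pow, leadingTerm, algebraMap_eq, C_mul_monomial]

theorem representable_le_restrictSupport (hf : ∀ i, f i ≠ 0) {S : Set m.syn}
    (hS : IsLowerSet S) : m.representable f S ≤ restrictSupport R (m.toSyn ⁻¹' S) := by
  rintro _ ⟨Q, hQ, rfl⟩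
  refine map_mem_of_mem_restrictSupport _ (fun e he => ?_) hQ
  rw [AlgHom.toLinearMap_apply, aeval_monomial, map_one, one_mul]
  refine restrictSupport_mono R (fun γ hγ => ?_) (m.mem_restrictSupport_Iic_degree _)
  exact hS hγ (m.toSyn_degree_prod_pow hf e ▸ he)

theorem aeval_leadingTerm_mem_restrictSupport (hf : ∀ i, f i ≠ 0) {S : Set m.syn}
    {Q : MvPolynomial ι R}
    (hQ : Q ∈ restrictSupport R (Finsupp.weight (m.degreeWeight f) ⁻¹' S)) :
    aeval (fun i => m.leadingTerm (f i)) Q ∈ restrictSupport R (m.toSyn ⁻¹' S) := by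
  refine map_mem_of_mem_restrictSupport (aeval fun i => m.leadingTerm (f i)).toLinearMap
    (fun e he => ?_) hQ
  rw [AlgHom.toLinearMap_apply, aeval_leadingTerm_monomial, mem_restrictSupport_iff]
  intro γ hγ
  rw [Finset.mem_singleton.mp (support_monomial_subset hγ), mem_preimage,
    m.toSyn_degree_prod_pow hf e]
  exact he

theorem aeval_sub_aeval_leadingTerm_mem_restrictSupport (hf : ∀ i, f i ≠ 0) {d : m.syn}
    {H : MvPolynomial ι R} (hH : IsWeightedHomogeneous (m.degreeWeight f) H d) :
    aeval f H - aeval (fun i => m.leadingTerm (f i)) H ∈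
      restrictSupport R (m.toSyn ⁻¹' Iio d) := by
  rw [isWeightedHomogeneous_iff_mem_restrictSupport] at hH
  refine map_mem_of_mem_restrictSupport
    ((aeval f).toLinearMap - (aeval fun i => m.leadingTerm (f i)).toLinearMap) (fun e he => ?_) hH
  rw [LinearMap.sub_apply, AlgHom.toLinearMap_apply, AlgHom.toLinearMap_apply, aeval_monomial,
    aeval_monomial, map_one, one_mul, one_mul, ← leadingTerm_prod_pow]
  have := m.sub_leadingTerm_mem_restrictSupport (e.prod fun i k => f i ^ k)
  rwa [m.toSyn_degree_prod_pow hf e, he] at this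

theorem aeval_leadingTerm_weightedHomogeneousComponent (hf : ∀ i, f i ≠ 0)
    {Q : MvPolynomial ι R} {g : MvPolynomial σ R}
    (hQ : aeval (fun i => m.leadingTerm (f i)) Q = m.leadingTerm g) :
    aeval (fun i => m.leadingTerm (f i))
      (weightedHomogeneousComponent (m.degreeWeight f) (m.toSyn (m.degree g)) Q) =
        m.leadingTerm g := by
  set d := m.toSyn (m.degree g)
  set H := weightedHomogeneousComponent (m.degreeWeight f) d Q
  have hH : H ∈ restrictSupport R (Finsupp.weight (m.degreeWeight f) ⁻¹' {d}) :=
    isWeightedHomogeneous_iff_mem_restrictSupport.mp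
      (weightedHomogeneousComponent_isWeightedHomogeneous _ _)
  have hlow := m.aeval_leadingTerm_mem_restrictSupport hf
    (sub_weightedHomogeneousComponent_mem_restrictSupport (S := univ) (φ := Q) (by simp) d)
  have hsame : aeval (fun i => m.leadingTerm (f i)) (Q - H) ∈
      restrictSupport R (m.toSyn ⁻¹' {d}) := by
    rw [map_sub, hQ]
    refine sub_mem (fun γ hγ => ?_) (m.aeval_leadingTerm_mem_restrictSupport hf hH)
    rw [leadingTerm] at hγ
    rw [Finset.mem_singleton.mp (support_monomial_subset hγ)]
    rfl
  have hzero : aeval (fun i => m.leadingTerm (f i)) (Q - H) = 0 :=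
    support_eq_empty.mp (Finset.eq_empty_of_forall_notMem fun γ hγ => (hlow hγ).2 (hsame hγ))
  rwa [map_sub, sub_eq_zero, hQ, eq_comm] at hzero

theorem leadingTerm_mem_adjoin_of_mem_representable (hf : ∀ i, f i ≠ 0)
    (hsyz : ∀ (T : MvPolynomial ι R) d, IsWeightedHomogeneous (m.degreeWeight f) T d →
      aeval (fun i => m.leadingTerm (f i)) T = 0 → aeval f T ∈ m.representable f (Iio d))
    (d : m.syn) {g : MvPolynomial σ R} (hg : g ∈ m.representable f (Iic d)) :
    m.leadingTerm g ∈ Algebra.adjoin R (range fun i => m.leadingTerm (f i)) := by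
  induction d using WellFoundedLT.induction generalizing g with
  | _ d ih =>
  obtain ⟨Q, hQ, rfl⟩ := hg
  rw [AlgHom.toLinearMap_apply]
  set H := weightedHomogeneousComponent (m.degreeWeight f) d Q
  have hHd : IsWeightedHomogeneous (m.degreeWeight f) H d :=
    weightedHomogeneousComponent_isWeightedHomogeneous _ _
  have hlow : aeval f (Q - H) ∈ m.representable f (Iio d) := by
    have := sub_weightedHomogeneousComponent_mem_restrictSupport hQ d
    rw [Iic_sdiff_right] at this
    exact m.aeval_mem_representable this
  by_cases hπ : aeval (fun i => m.leadingTerm (f i)) H = 0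
  · have hQd : aeval f Q ∈ m.representable f (Iio d) := by
      simpa using add_mem hlow (hsyz H d hHd hπ)
    rcases m.eq_zero_or_exists_lt_of_mem_representable_Iio hQd with h0 | ⟨d', hd', hQd'⟩
    · rw [h0, leadingTerm_zero]
      exact zero_mem _
    · exact ih d' hd' hQd'
  · have hsub : aeval f Q - aeval (fun i => m.leadingTerm (f i)) H ∈
        restrictSupport R (m.toSyn ⁻¹' Iio d) := by
      have := add_mem (m.representable_le_restrictSupport hf (isLowerSet_Iio d) hlow)
        (m.aeval_sub_aeval_leadingTerm_mem_restrictSupport hf hHd)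
      rwa [map_sub, sub_add_sub_cancel] at this
    rw [m.leadingTerm_eq_of_sub_mem_restrictSupport (m.aeval_leadingTerm_mem_restrictSupport hf
      (isWeightedHomogeneous_iff_mem_restrictSupport.mp hHd)) hπ hsub,
      Algebra.adjoin_range_eq_range_aeval]
    exact ⟨H, rfl⟩

end MonomialOrder

section SReduction

open Set

variable {n : ℕ} {R ι : Type*} [CommRing R] {f : ι → MvPolynomial (Fin n) R}

theorem isPowerProduct_range_iff (hinj : Function.Injective f) {q : MvPolynomial (Fin n) R} :
    IsPowerProduct (range f) q ↔ ∃ e : ι →₀ ℕ, q = e.prod fun i k => f i ^ k := by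
  constructor
  · rintro ⟨e', hsupp, rfl⟩
    refine ⟨Finsupp.comapDomain f e' hinj.injOn, ?_⟩
    conv_lhs => rw [← Finsupp.embDomain_comapDomain (f := ⟨f, hinj⟩) hsupp]
    rw [Finsupp.prod_embDomain]
    rfl
  · rintro ⟨e, rfl⟩
    refine ⟨Finsupp.embDomain ⟨f, hinj⟩ e, ?_, ?_⟩
    · rw [Finsupp.support_embDomain, Finset.coe_map]
      exact image_subset_range _ _
    · rw [Finsupp.prod_embDomain]
      rfl

theorem isSAGBI_adjoin_range_iff (ord : TermOrder n) :
    IsSAGBI ord (Algebra.adjoin R (range f)) (range f) ↔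
      ∀ g ∈ Algebra.adjoin R (range f), ord.toMonomialOrder.leadingTerm g ∈
        Algebra.adjoin R (range fun i => ord.toMonomialOrder.leadingTerm (f i)) := by
  rw [IsSAGBI, ord.ltm_eq_leadingTerm, ← range_comp]
  refine ⟨fun h g hg => h ▸ Algebra.subset_adjoin (mem_image_of_mem _ hg), fun h => ?_⟩
  refine le_antisymm (Algebra.adjoin_le ?_) ?_
  · rintro _ ⟨g, hg, rfl⟩
    exact h g hg
  · rw [range_comp]
    exact Algebra.adjoin_mono (image_mono Algebra.subset_adjoin)

variable [IsDomain R]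

theorem sStep_sub_aeval (ord : TermOrder n) (hinj : Function.Injective f) (hf : ∀ i, f i ≠ 0)
    {H : MvPolynomial ι R} {g : MvPolynomial (Fin n) R} {β : Fin n →₀ ℕ}
    (hH : IsWeightedHomogeneous (ord.toMonomialOrder.degreeWeight f) H
      (ord.toMonomialOrder.toSyn β))
    (hβ : g.coeff β ≠ 0)
    (hgβ : g.coeff β =
      (aeval (fun i => ord.toMonomialOrder.leadingTerm (f i)) H).coeff β) :
    SStep ord (range f) g (g - aeval f H) := by
  classical
  set m := ord.toMonomialOrder
  have hdeg : ∀ e ∈ H.support, m.degree (e.prod fun i k => f i ^ k) = β := fun e he =>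
    m.toSyn.injective ((m.toSyn_degree_prod_pow hf e).trans (hH (mem_support_iff.mp he)))
  refine ⟨β, H.support.card,
    fun k => (H.support.equivFin.symm k : ι →₀ ℕ).prod fun i k => f i ^ k,
    fun k => H.coeff (H.support.equivFin.symm k), hβ, fun k => ⟨?_, ?_, ?_⟩, ?_, ?_⟩
  · exact (isPowerProduct_range_iff hinj).mpr ⟨_, rfl⟩
  · exact Finset.prod_ne_zero_iff.mpr fun i _ => pow_ne_zero _ (hf i)
  · rw [ord.lp_eq_degree]
    exact hdeg _ (H.support.equivFin.symm k).2
  · simp only [ord.lc_eq_leadingCoeff]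
    rw [Finset.sum_equivFin_symm H.support
      fun e => H.coeff e * m.leadingCoeff (e.prod fun i k => f i ^ k), hgβ]
    conv_lhs => rw [H.as_sum]
    rw [map_sum, coeff_sum]
    refine Finset.sum_congr rfl fun e he => ?_
    rw [m.aeval_leadingTerm_monomial, coeff_monomial, if_pos (hdeg e he)]
  · rw [Finset.sum_equivFin_symm H.support fun e => C (H.coeff e) * e.prod fun i k => f i ^ k]
    conv_lhs => rw [H.as_sum]
    simp only [map_sum, aeval_monomial, algebraMap_eq]

theorem mem_representable_of_sReduce_zero (ord : TermOrder n) (hinj : Function.Injective f)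
    (hf : ∀ i, f i ≠ 0) {S : Set ord.toMonomialOrder.syn} (hS : IsLowerSet S)
    {g : MvPolynomial (Fin n) R} (hred : SReduce ord (range f) g 0)
    (hg : g ∈ restrictSupport R (ord.toMonomialOrder.toSyn ⁻¹' S)) :
    g ∈ ord.toMonomialOrder.representable f S := by
  induction hred using Relation.ReflTransGen.head_induction_on with
  | refl => exact zero_mem _
  | head step _ ih =>
    obtain ⟨β, N, q, r, hβ, hq, -, rfl⟩ := step
    choose e he using fun k => (isPowerProduct_range_iff hinj).mp (hq k).1
    have hqS : ∀ k, C (r k) * q k ∈ ord.toMonomialOrder.representable f S := fun k => by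
      rw [he k, ← algebraMap_eq, ← aeval_monomial]
      refine ord.toMonomialOrder.aeval_mem_representable fun e' he' => ?_
      rw [Finset.mem_singleton.mp (support_monomial_subset he'), mem_preimage,
        ← ord.toMonomialOrder.toSyn_degree_prod_pow hf, ← he k, ← ord.lp_eq_degree,
        (hq k).2.2]
      exact hg (mem_support_iff.mpr hβ)
    have hsum : ∑ k, C (r k) * q k ∈ ord.toMonomialOrder.representable f S :=
      sum_mem fun k _ => hqS k
    have hrest := ih (sub_mem hg
      (ord.toMonomialOrder.representable_le_restrictSupport hf hS hsum))
    simpa using add_mem hrest hsum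

theorem sReduce_zero_of_leadingTerm_mem_adjoin (ord : TermOrder n)
    (hinj : Function.Injective f) (hf : ∀ i, f i ≠ 0)
    (hlt : ∀ g ∈ Algebra.adjoin R (range f), ord.toMonomialOrder.leadingTerm g ∈
      Algebra.adjoin R (range fun i => ord.toMonomialOrder.leadingTerm (f i)))
    {g : MvPolynomial (Fin n) R} (hg : g ∈ Algebra.adjoin R (range f)) :
    SReduce ord (range f) g 0 := by
  set m := ord.toMonomialOrder
  induction hd : m.toSyn (m.degree g) using WellFoundedLT.induction generalizing g with
  | _ d ih =>
  rcases eq_or_ne g 0 with rfl | hg0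
  · exact Relation.ReflTransGen.refl
  obtain ⟨Q, hQ⟩ : m.leadingTerm g ∈ (aeval (R := R) fun i => m.leadingTerm (f i)).range := by
    rw [← Algebra.adjoin_range_eq_range_aeval]
    exact hlt g hg
  set H := weightedHomogeneousComponent (m.degreeWeight f) (m.toSyn (m.degree g)) Q
  have hHd : IsWeightedHomogeneous (m.degreeWeight f) H (m.toSyn (m.degree g)) :=
    weightedHomogeneousComponent_isWeightedHomogeneous _ _
  have hH : aeval (fun i => m.leadingTerm (f i)) H = m.leadingTerm g :=
    m.aeval_leadingTerm_weightedHomogeneousComponent hf hQ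
  have hstep : SStep ord (range f) g (g - aeval f H) := by
    refine sStep_sub_aeval ord hinj hf hHd (m.coeff_degree_ne_zero_iff.mpr hg0) ?_
    rw [hH, MonomialOrder.leadingTerm, coeff_monomial, if_pos rfl]
    rfl
  refine Relation.ReflTransGen.head hstep ?_
  have hlow : g - aeval f H ∈ restrictSupport R (m.toSyn ⁻¹' Iio d) := by
    have := sub_mem (m.sub_leadingTerm_mem_restrictSupport g)
      (m.aeval_sub_aeval_leadingTerm_mem_restrictSupport hf hHd)
    rwa [hH, sub_sub_sub_cancel_right, hd] at this
  rcases eq_or_ne (g - aeval f H) 0 with h0 | h0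
  · exact h0 ▸ Relation.ReflTransGen.refl
  · exact ih _ (hlow (m.degree_mem_support h0)) (sub_mem hg (aeval_mem_adjoin_range f H)) rfl

end SReduction

theorem isSAGBI_iff_relations_sreduce_zero_general {n : ℕ} {R : Type*} [CommRing R]
    [IsDomain R] (ord : TermOrder n)
    {ι : Type*} (f : ι → MvPolynomial (Fin n) R)
    (hinj : Function.Injective f) (hnz : ∀ i, f i ≠ 0)
    {J : Type*} (P : J → MvPolynomial ι R)
    (hgen : Ideal.span (Set.range P) =
      RingHom.ker ((MvPolynomial.aeval fun i => ord.ltm (f i) :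
        MvPolynomial ι R →ₐ[R] MvPolynomial (Fin n) R)))
    (hhom : ∀ j, ∀ a ∈ (P j).support, ∀ b ∈ (P j).support,
      ord.lp (a.prod fun i k => f i ^ k) = ord.lp (b.prod fun i k => f i ^ k)) :
    IsSAGBI ord (Algebra.adjoin R (Set.range f)) (Set.range f) ↔
      ∀ j, SReduce ord (Set.range f) (MvPolynomial.aeval f (P j)) 0 := by
  set m := ord.toMonomialOrder
  rw [isSAGBI_adjoin_range_iff]
  refine ⟨fun hS j => sReduce_zero_of_leadingTerm_mem_adjoin ord hinj hnz hS
    (aeval_mem_adjoin_range f (P j)), fun hred => ?_⟩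
  rw [ord.ltm_eq_leadingTerm] at hgen
  have hP : ∀ j, ∃ δ, IsWeightedHomogeneous (m.degreeWeight f) (P j) δ := by
    intro j
    rcases (P j).support.eq_empty_or_nonempty with h | ⟨a, ha⟩
    · exact ⟨0, support_eq_empty.mp h ▸ isWeightedHomogeneous_zero _ _ _⟩
    · refine ⟨Finsupp.weight (m.degreeWeight f) a, fun b hb => ?_⟩
      rw [← m.toSyn_degree_prod_pow hnz, ← m.toSyn_degree_prod_pow hnz, ← ord.lp_eq_degree,
        ← ord.lp_eq_degree, hhom j b (mem_support_iff.mpr hb) a ha]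
  choose δ hδ using hP
  have hPF : ∀ j, aeval f (P j) ∈ m.representable f (Set.Iio (δ j)) := by
    intro j
    have hker : aeval (fun i => m.leadingTerm (f i)) (P j) = 0 :=
      RingHom.mem_ker.mp (hgen ▸ Ideal.subset_span (Set.mem_range_self j))
    refine mem_representable_of_sReduce_zero ord hinj hnz (isLowerSet_Iio _) (hred j) ?_
    simpa only [hker, sub_zero] using m.aeval_sub_aeval_leadingTerm_mem_restrictSupport hnz (hδ j)
  intro g hg
  obtain ⟨Q, rfl⟩ : g ∈ (aeval (R := R) f).range :=
    Algebra.adjoin_range_eq_range_aeval R f ▸ hg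
  refine m.leadingTerm_mem_adjoin_of_mem_representable hnz (fun T d hTd hT0 => ?_) _
    (m.aeval_mem_representable_Iic_sup Q)
  exact m.aeval_mem_representable_of_mem_span hδ hPF (hgen ▸ RingHom.mem_ker.mpr hT0) hTd

/-- SAGBI criterion.  Let `F = (fᵢ)` be distinct nonzero polynomials,
`π : R[Y] → R[Lt F]` the evaluation `yᵢ ↦ lt(fᵢ)`, and `(P_j)` a family of
`T_X`-homogeneous generators of `I(Lt F) = ker π`.  Then `F` is a SAGBI basis for
`R[F]` iff every `P_j(F)` s-reduces to `0` via `F`. -/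
theorem isSAGBI_iff_relations_sreduce_zero {n : ℕ} {R : Type*} [CommRing R]
    [IsDomain R] [IsNoetherianRing R] (ord : TermOrder n)
    {ι : Type*} (f : ι → MvPolynomial (Fin n) R)
    (hinj : Function.Injective f) (hnz : ∀ i, f i ≠ 0)
    {J : Type*} (P : J → MvPolynomial ι R)
    (hgen : Ideal.span (Set.range P) =
      RingHom.ker ((MvPolynomial.aeval fun i => ord.ltm (f i) :
        MvPolynomial ι R →ₐ[R] MvPolynomial (Fin n) R)))
    (hhom : ∀ j, ∀ a ∈ (P j).support, ∀ b ∈ (P j).support,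
      ord.lp (a.prod fun i k => f i ^ k) = ord.lp (b.prod fun i k => f i ^ k)) :
    IsSAGBI ord (Algebra.adjoin R (Set.range f)) (Set.range f) ↔
      ∀ j, SReduce ord (Set.range f) (MvPolynomial.aeval f (P j)) 0 :=
  isSAGBI_iff_relations_sreduce_zero_general ord f hinj hnz P hgen hhom
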